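/- Let q be a prime with q = 3 or q ≡ 5 or 19 (mod 24) (i.e. q ≡ ±5 (mod 24)). For every complex number s with Re(s) > 1, L(s, λ_q) = (ζ(qs) ζ(2s) / ζ(s)) · ∏_p ( 1 + ∑_{m=2}^{q-1} { ((m+1)/q) + (m/q) } · p^{-ms} ), where the product runs over all prime numbers p. -/

import Mathlib

open Filter

/-- `λ_q(n) = (τ(n)/q)` : the Legendre symbol mod `q` of the number of divisors of `n`. -/
noncomputable def lamq (q : ℕ) [Fact q.Prime] (n : ℕ) : ℂ :=
  (legendreSym q (n.divisors.card : ℤ) : ℂ)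

/-!
Since `τ` and the Legendre symbol are multiplicative, so is `λ_q`, and `λ_q(p^e) = ((e+1)/q)`
is periodic in `e` with period `q`. With `x = p^{-s}` its Euler factor at `p` is therefore
`P(x) / (1 - x^q)`, where `P(x) = ∑_{e<q} ((e+1)/q) x^e`. Multiplying by the factor `1/(1 - x)`
of `ζ(s)` and dividing by the factors `1/(1 - x^q)` and `1/(1 - x^2)` of `ζ(qs)` and `ζ(2s)`
leaves `P(x)(1 + x)`, which is the stated polynomial because `(1/q) = 1`, `(q/q) = 0` and
`(2/q) = -1` for `q ≡ ±3 (mod 8)`.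
-/

open Finset

lemma one_sub_pow_ne_zero_of_norm_lt_one {K : Type*} [NormedDivisionRing K] {x : K}
    (hx : ‖x‖ < 1) {k : ℕ} (hk : k ≠ 0) : 1 - x ^ k ≠ 0 := by
  refine sub_ne_zero.2 fun h ↦ ?_
  have := congrArg norm h
  rw [norm_one, norm_pow] at this
  exact (pow_lt_one₀ (norm_nonneg x) hx hk).ne this.symm

theorem hasSum_mul_pow_of_periodic {K : Type*} [NormedField K] [CompleteSpace K] {a : ℕ → K}
    {N : ℕ} (ha : Function.Periodic a N) (hN : N ≠ 0) {x : K} (hx : ‖x‖ < 1) :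
    HasSum (fun n ↦ a n * x ^ n) ((∑ n ∈ range N, a n * x ^ n) / (1 - x ^ N)) := by
  have hbound (n : ℕ) : ‖a n * x ^ n‖ ≤ (∑ r ∈ range N, ‖a r‖) * ‖x‖ ^ n := by
    rw [norm_mul, norm_pow, ← ha.map_mod_nat n]
    gcongr
    exact single_le_sum (fun r _ ↦ norm_nonneg (a r)) (mem_range.2 (Nat.mod_lt n (by omega)))
  have hsum : Summable (fun n ↦ a n * x ^ n) :=
    .of_norm_bounded ((summable_geometric_of_lt_one (norm_nonneg x) hx).mul_left _) hbound
  have hshift : ∑' n, a (n + N) * x ^ (n + N) = (∑' n, a n * x ^ n) * x ^ N := by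
    simp only [pow_add, ← mul_assoc, tsum_mul_right]
    exact congrArg (· * x ^ N) (tsum_congr fun n ↦ by rw [ha n])
  convert hsum.hasSum
  rw [div_eq_iff (one_sub_pow_ne_zero_of_norm_lt_one hx hN), mul_sub, mul_one, ← hshift,
    ← hsum.sum_add_tsum_nat_add N, add_sub_cancel_right]

theorem sum_range_mul_one_add {R : Type*} [CommRing R] {a : ℕ → R} {N : ℕ} (hN : 3 ≤ N)
    (h₁ : a 1 = 1) (h₂ : a 2 = -1) (hN₀ : a N = 0) (x : R) :
    (∑ e ∈ range N, a (e + 1) * x ^ e) * (1 + x) =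
      1 + ∑ m ∈ Icc 2 (N - 1), (a (m + 1) + a m) * x ^ m := by
  obtain ⟨n, rfl⟩ : ∃ n, N = n + 3 := ⟨N - 3, by omega⟩
  have hIcc : Icc 2 (n + 3 - 1) = Ico 2 (n + 3) := by
    ext m
    simp only [mem_Icc, mem_Ico]
    omega
  set S := ∑ k ∈ range n, a (k + 3) * x ^ (k + 3)
  have hlow : ∑ k ∈ range (n + 1), a (k + 2) * x ^ (k + 2) = a 2 * x ^ 2 + S := by
    rw [sum_range_succ', add_comm]
  have hhigh : (∑ k ∈ range (n + 1), a (k + 3) * x ^ (k + 2)) * x = S := by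
    simp only [S, sum_mul, sum_range_succ, hN₀, zero_mul, add_zero, mul_assoc, ← pow_succ]
  rw [hIcc, sum_Ico_eq_sum_range, show n + 3 - 2 = n + 1 by omega, sum_range_succ',
    sum_range_succ']
  simp only [add_comm 2, add_assoc, Nat.reduceAdd, zero_add, pow_zero, pow_one, mul_one, add_mul,
    sum_add_distrib, hlow, h₁, h₂]
  linear_combination hhigh

lemma Complex.cpow_neg_natCast_mul (x : ℂ) (k : ℕ) (s : ℂ) :
    x ^ (-(k * s)) = (x ^ (-s)) ^ k := by
  rw [← Complex.cpow_nat_mul, mul_neg]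

lemma LSeries.term_mul_of_coprime {f : ℕ → ℂ}
    (hmul : ∀ {m n : ℕ}, m.Coprime n → f (m * n) = f m * f n) (s : ℂ) {m n : ℕ}
    (hmn : m.Coprime n) : LSeries.term f s (m * n) = LSeries.term f s m * LSeries.term f s n := by
  rcases eq_or_ne m 0 with rfl | hm
  · simp
  rcases eq_or_ne n 0 with rfl | hn
  · simp
  rw [LSeries.term_of_ne_zero (mul_ne_zero hm hn), LSeries.term_of_ne_zero hm,
    LSeries.term_of_ne_zero hn, hmul hmn, Nat.cast_mul, Complex.natCast_mul_natCast_cpow,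
    mul_div_mul_comm]

lemma LSeries.term_pow (f : ℕ → ℂ) (s : ℂ) {p : ℕ} (hp : p ≠ 0) (e : ℕ) :
    LSeries.term f s (p ^ e) = f (p ^ e) * ((p : ℂ) ^ (-s)) ^ e := by
  rw [LSeries.term_of_ne_zero (pow_ne_zero e hp), ← Complex.cpow_neg_natCast_mul,
    Complex.cpow_neg, Complex.natCast_cpow_natCast_mul, Nat.cast_pow, div_eq_mul_inv]

theorem LSeries_eulerProduct_hasProd_of_coprime_mul {f : ℕ → ℂ} (h₁ : f 1 = 1)
    (hmul : ∀ {m n : ℕ}, m.Coprime n → f (m * n) = f m * f n) {s : ℂ}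
    (hs : LSeriesSummable f s) :
    HasProd (fun p : Nat.Primes ↦ ∑' e : ℕ, f (p ^ e) * ((p : ℂ) ^ (-s)) ^ e) (LSeries f s) := by
  convert EulerProduct.eulerProduct_hasProd (by simp [h₁]) (LSeries.term_mul_of_coprime hmul s)
    hs.norm (LSeries.term_zero f s) using 2 with p
  · exact tsum_congr fun e ↦ (LSeries.term_pow f s p.prop.ne_zero e).symm
  · rfl

lemma legendreSym_two_eq_neg_one {q : ℕ} [Fact q.Prime] (hq : q % 8 = 3 ∨ q % 8 = 5) :
    legendreSym q 2 = -1 := by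
  rw [legendreSym.eq_neg_one_iff, Int.cast_ofNat, ZMod.exists_sq_eq_two_iff (by omega)]
  omega

section lamq

variable {q : ℕ} [Fact q.Prime]

lemma lamq_one : lamq q 1 = 1 := by
  simp [lamq]

lemma lamq_mul_of_coprime {m n : ℕ} (hmn : m.Coprime n) :
    lamq q (m * n) = lamq q m * lamq q n := by
  simp [lamq, Nat.Coprime.card_divisors_mul hmn, legendreSym.mul]

lemma norm_lamq_le_one (n : ℕ) : ‖lamq q n‖ ≤ 1 := by
  unfold lamq legendreSym
  rcases quadraticChar_isQuadratic (ZMod q) ((n.divisors.card : ℤ) : ZMod q) with h | h | h <;>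
    rw [h] <;> simp

lemma lamq_prime_pow {p : ℕ} (hp : p.Prime) (e : ℕ) :
    lamq q (p ^ e) = legendreSym q (e + 1 : ℕ) := by
  rw [lamq, Nat.divisors_prime_pow hp, card_map, card_range]

lemma hasSum_lamq_prime_pow_mul_pow {p : ℕ} (hp : p.Prime) {x : ℂ} (hx : ‖x‖ < 1) :
    HasSum (fun e ↦ lamq q (p ^ e) * x ^ e)
      ((∑ e ∈ range q, (legendreSym q (e + 1 : ℕ) : ℂ) * x ^ e) / (1 - x ^ q)) := by
  simp only [lamq_prime_pow hp]
  refine hasSum_mul_pow_of_periodic (a := fun e ↦ (legendreSym q (e + 1 : ℕ) : ℂ)) (fun e ↦ ?_)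
    (Fact.out : q.Prime).ne_zero hx
  simp [legendreSym, add_right_comm e q 1]

lemma tsum_lamq_prime_pow_mul_div_eq (hq : q % 8 = 3 ∨ q % 8 = 5) {p : ℕ} (hp : p.Prime)
    {x : ℂ} (hx : ‖x‖ < 1) :
    (∑' e, lamq q (p ^ e) * x ^ e) * (1 - x)⁻¹ / ((1 - x ^ q)⁻¹ * (1 - x ^ 2)⁻¹) =
      1 + ∑ m ∈ Icc 2 (q - 1),
        ((legendreSym q ((m : ℤ) + 1) + legendreSym q (m : ℤ) : ℤ) : ℂ) * x ^ m := by
  have hpoly := sum_range_mul_one_add (a := fun k : ℕ ↦ (legendreSym q k : ℂ)) (N := q)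
    (by omega) (by simp) (by exact_mod_cast legendreSym_two_eq_neg_one hq)
    (by simp [legendreSym.eq_zero_iff]) x
  have h1 : 1 - x ≠ 0 := by simpa using one_sub_pow_ne_zero_of_norm_lt_one hx one_ne_zero
  have hxq : 1 - x ^ q ≠ 0 := one_sub_pow_ne_zero_of_norm_lt_one hx (Fact.out : q.Prime).ne_zero
  rw [(hasSum_lamq_prime_pow_mul_pow hp hx).tsum_eq]
  push_cast at hpoly ⊢
  rw [← hpoly]
  field_simp
  ring

end lamq

theorem dirichlet_series_lamq_pm5_mod24 (q : ℕ) [Fact q.Prime]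
    (hq : q = 3 ∨ q % 24 = 5 ∨ q % 24 = 19) (s : ℂ) (hs : 1 < s.re) :
    LSeries (lamq q) s =
      riemannZeta (q * s) * riemannZeta (2 * s) / riemannZeta s *
        ∏' p : Nat.Primes,
          (1 + ∑ m ∈ Finset.Icc 2 (q - 1),
            ((legendreSym q ((m : ℤ) + 1) + legendreSym q (m : ℤ) : ℤ) : ℂ) *
              ((p : ℕ) : ℂ) ^ (-((m : ℂ) * s))) := by
  have hq8 : q % 8 = 3 ∨ q % 8 = 5 := by omega
  have hq₀ : q ≠ 0 := (Fact.out : q.Prime).ne_zero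
  have hre {k : ℕ} (hk : k ≠ 0) : 1 < ((k : ℂ) * s).re := by
    simp only [Complex.mul_re, Complex.natCast_re, Complex.natCast_im, zero_mul, sub_zero]
    nlinarith [(Nat.one_le_cast (α := ℝ)).2 (Nat.one_le_iff_ne_zero.2 hk)]
  have hx (p : Nat.Primes) : ‖(p : ℂ) ^ (-s)‖ < 1 := by
    rw [Complex.norm_natCast_cpow_of_pos p.prop.pos, Complex.neg_re]
    exact Real.rpow_lt_one_of_one_lt_of_neg (mod_cast p.prop.one_lt) (by linarith)
  have hL := LSeries_eulerProduct_hasProd_of_coprime_mul (lamq_one (q := q)) lamq_mul_of_coprime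
    (LSeriesSummable_of_bounded_of_one_lt_re (fun n _ ↦ norm_lamq_le_one n) hs)
  have hζ := (riemannZeta_eulerProduct_hasProd (hre hq₀)).mul
    (riemannZeta_eulerProduct_hasProd (hre two_ne_zero))
  have hζq := riemannZeta_ne_zero_of_one_lt_re (hre hq₀)
  have hζ2 := riemannZeta_ne_zero_of_one_lt_re (hre two_ne_zero)
  have hprod := (hL.mul (riemannZeta_eulerProduct_hasProd hs)).div₀ hζ (mul_ne_zero hζq hζ2)
  simp only [Complex.cpow_neg_natCast_mul] at hprod ⊢
  rw [← tprod_congr fun p : Nat.Primes ↦ tsum_lamq_prime_pow_mul_div_eq hq8 p.prop (hx p),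
    hprod.tprod_eq]
  rw [Nat.cast_ofNat] at hζ2 ⊢
  rw [div_mul_div_comm, eq_div_iff (mul_ne_zero (riemannZeta_ne_zero_of_one_lt_re hs)
    (mul_ne_zero hζq hζ2))]
  ring
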